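/- arXiv:2408.01663 — 3 statements merged into one kernel-verified Lean document; each statement's English description precedes it below -/
import Mathlib

section
/- (Additivity) For any unitaries U₁ on ℂ^(2^n) and U₂ on ℂ^(2^m), the Pauli instability satisfies 𝕀(U₁⊗U₂) = 𝕀(U₁) + 𝕀(U₂), where U₁⊗U₂ is the Kronecker product acting on ℂ^(2^(n+m)). -/
open Matrix Complex

noncomputable section

/-- The four single-qubit Pauli matrices `I, X, Y, Z`. -/
def pauliMat : Fin 4 → Matrix (Fin 2) (Fin 2) ℂ
  | 0 => 1
  | 1 => !![0, 1; 1, 0]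
  | 2 => !![0, -Complex.I; Complex.I, 0]
  | 3 => !![1, 0; 0, -1]

/-- The `k`-th binary digit of `i : Fin (2^n)`. -/
def qubit {n : ℕ} (k : Fin n) (i : Fin (2 ^ n)) : Fin 2 :=
  ⟨(i : ℕ) / 2 ^ (k : ℕ) % 2, Nat.mod_lt _ (by norm_num)⟩

/-- `n`-fold Kronecker product of single-qubit matrices, as a `2^n × 2^n` matrix. -/
def nfold (n : ℕ) (f : Fin n → Matrix (Fin 2) (Fin 2) ℂ) :
    Matrix (Fin (2 ^ n)) (Fin (2 ^ n)) ℂ :=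
  Matrix.of fun i j => ∏ k : Fin n, f k (qubit k i) (qubit k j)

/-- The `n`-qubit Pauli string `P⁽¹⁾ ⊗ ⋯ ⊗ P⁽ⁿ⁾` labelled by `s : Fin n → Fin 4`. -/
def PauliString (n : ℕ) (s : Fin n → Fin 4) : Matrix (Fin (2 ^ n)) (Fin (2 ^ n)) ℂ :=
  nfold n fun k => pauliMat (s k)

/-- The out-of-time-ordered correlator `2^{-n}·Tr(U†P₁U·P₂·U†P₁U·P₂)`. -/
def OTOC (n : ℕ) (U P₁ P₂ : Matrix (Fin (2 ^ n)) (Fin (2 ^ n)) ℂ) : ℂ :=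
  (2 ^ n : ℂ)⁻¹ * (Uᴴ * P₁ * U * P₂ * Uᴴ * P₁ * U * P₂).trace

/-- The Pauli instability `𝕀(U) = -log( 16^{-n} Σ_{P₁,P₂} |OTOC(U,P₁,P₂)| )`. -/
def pauliInstability (n : ℕ) (U : Matrix (Fin (2 ^ n)) (Fin (2 ^ n)) ℂ) : ℝ :=
  -Real.log ((16 ^ n : ℝ)⁻¹ * ∑ s₁ : Fin n → Fin 4, ∑ s₂ : Fin n → Fin 4,
      ‖OTOC n U (PauliString n s₁) (PauliString n s₂)‖)

/-- `V` is Clifford: it maps every Pauli string to a Pauli string up to a phase. -/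
def IsClifford (n : ℕ) (V : Matrix (Fin (2 ^ n)) (Fin (2 ^ n)) ℂ) : Prop :=
  ∀ s : Fin n → Fin 4, ∃ (s' : Fin n → Fin 4) (φ : ℝ),
    Vᴴ * PauliString n s * V = Complex.exp (-(φ * Complex.I)) • PauliString n s'


/-- Kronecker product of a `2^n × 2^n` matrix with a `2^m × 2^m` matrix, realized as a
`2^(n+m) × 2^(n+m)` matrix. -/
def kron (n m : ℕ) (A : Matrix (Fin (2 ^ n)) (Fin (2 ^ n)) ℂ)
    (B : Matrix (Fin (2 ^ m)) (Fin (2 ^ m)) ℂ) :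
    Matrix (Fin (2 ^ (n + m))) (Fin (2 ^ (n + m))) ℂ :=
  Matrix.reindex (finProdFinEquiv.trans (finCongr (pow_add 2 n m).symm))
    (finProdFinEquiv.trans (finCongr (pow_add 2 n m).symm))
    (Matrix.kroneckerMap (· * ·) A B)

-- kron mul
lemma kron_mul (n m : ℕ) (A A' : Matrix (Fin (2 ^ n)) (Fin (2 ^ n)) ℂ)
    (B B' : Matrix (Fin (2 ^ m)) (Fin (2 ^ m)) ℂ) :
    kron n m A B * kron n m A' B' = kron n m (A * A') (B * B') := by
  simp only [kron, Matrix.reindex_apply]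
  rw [Matrix.submatrix_mul_equiv, Matrix.mul_kronecker_mul]

lemma kron_conjTranspose (n m : ℕ) (A : Matrix (Fin (2 ^ n)) (Fin (2 ^ n)) ℂ)
    (B : Matrix (Fin (2 ^ m)) (Fin (2 ^ m)) ℂ) :
    (kron n m A B)ᴴ = kron n m Aᴴ Bᴴ := by
  simp only [kron, Matrix.reindex_apply, Matrix.conjTranspose_submatrix]
  ext ⟨i₁, i₂⟩ ⟨j₁, j₂⟩
  simp [Matrix.kroneckerMap, Matrix.conjTranspose_apply, mul_comm]

lemma kron_trace (n m : ℕ) (A : Matrix (Fin (2 ^ n)) (Fin (2 ^ n)) ℂ)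
    (B : Matrix (Fin (2 ^ m)) (Fin (2 ^ m)) ℂ) :
    (kron n m A B).trace = A.trace * B.trace := by
  have : (kron n m A B).trace = (Matrix.kroneckerMap (· * ·) A B).trace := by
    simp only [kron, Matrix.reindex_apply, Matrix.trace, Matrix.diag, Matrix.submatrix_apply]
    exact Equiv.sum_comp (finProdFinEquiv.trans (finCongr (pow_add 2 n m).symm)).symm
      (fun p => Matrix.kroneckerMap (· * ·) A B p p)
  rw [this, Matrix.trace_kronecker]

lemma OTOC_kron (n m : ℕ) (U₁ P₁ Q₁ : Matrix (Fin (2 ^ n)) (Fin (2 ^ n)) ℂ)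
    (U₂ P₂ Q₂ : Matrix (Fin (2 ^ m)) (Fin (2 ^ m)) ℂ) :
    OTOC (n + m) (kron n m U₁ U₂) (kron n m P₁ P₂) (kron n m Q₁ Q₂) =
      OTOC n U₁ P₁ Q₁ * OTOC m U₂ P₂ Q₂ := by
  simp only [OTOC, kron_conjTranspose, kron_mul, kron_trace]
  rw [pow_add, mul_inv]
  ring

/-- Combine Pauli labels: second factor on the low `m` qubits, first on the high `n`. -/
def combineEquiv (n m : ℕ) : ((Fin n → Fin 4) × (Fin m → Fin 4)) ≃ (Fin (n + m) → Fin 4) :=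
  (Equiv.prodComm _ _).trans
    ((Equiv.sumArrowEquivProdArrow (Fin m) (Fin n) (Fin 4)).symm.trans
      (Equiv.arrowCongr (finSumFinEquiv.trans (finCongr (Nat.add_comm m n))) (Equiv.refl _)))

lemma nat_low {k m : ℕ} (hk : k < m) (x : ℕ) : x / 2 ^ k % 2 = x % 2 ^ m / 2 ^ k % 2 := by
  conv_lhs => rw [← Nat.mod_add_div x (2 ^ m)]
  have h1 : 2 ^ m = 2 ^ k * 2 ^ (m - k) := by rw [← pow_add]; congr 1; omega
  rw [h1, mul_assoc, Nat.add_mul_div_left _ _ (pow_pos (by norm_num : (0:ℕ) < 2) k)]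
  have h2 : 2 ^ (m - k) = 2 * 2 ^ (m - k - 1) := by
    rw [← pow_succ']; congr 1; omega
  rw [h2, mul_assoc, Nat.add_mul_mod_self_left]

lemma nat_high (k m x : ℕ) : x / 2 ^ (m + k) % 2 = x / 2 ^ m / 2 ^ k % 2 := by
  rw [Nat.div_div_eq_div_mul, ← pow_add]

lemma pauliString_kron (n m : ℕ) (s₁ : Fin n → Fin 4) (s₂ : Fin m → Fin 4) :
    kron n m (PauliString n s₁) (PauliString m s₂) =
      PauliString (n + m) (combineEquiv n m (s₁, s₂)) := by
  ext i j
  set σ : Fin m ⊕ Fin n ≃ Fin (n + m) := finSumFinEquiv.trans (finCongr (Nat.add_comm m n))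
  have hrhs : PauliString (n + m) (combineEquiv n m (s₁, s₂)) i j =
      (∏ k : Fin m, pauliMat ((combineEquiv n m (s₁, s₂)) (σ (Sum.inl k)))
          (qubit (σ (Sum.inl k)) i) (qubit (σ (Sum.inl k)) j)) *
      ∏ k : Fin n, pauliMat ((combineEquiv n m (s₁, s₂)) (σ (Sum.inr k)))
          (qubit (σ (Sum.inr k)) i) (qubit (σ (Sum.inr k)) j) := by
    rw [PauliString, nfold]
    rw [show (Matrix.of fun i j => ∏ k : Fin (n+m),
        pauliMat ((combineEquiv n m (s₁, s₂)) k) (qubit k i) (qubit k j)) i j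
      = ∏ k : Fin (n+m), pauliMat ((combineEquiv n m (s₁, s₂)) k) (qubit k i) (qubit k j) from rfl]
    rw [← Equiv.prod_comp σ, Fintype.prod_sum_type]
  rw [hrhs]
  have hcomb1 : ∀ k : Fin m, (combineEquiv n m (s₁, s₂)) (σ (Sum.inl k)) = s₂ k := by
    intro k; simp [combineEquiv, σ, Equiv.arrowCongr]
  have hcomb2 : ∀ k : Fin n, (combineEquiv n m (s₁, s₂)) (σ (Sum.inr k)) = s₁ k := by
    intro k; simp [combineEquiv, σ, Equiv.arrowCongr]
  have hσ1 : ∀ k : Fin m, ((σ (Sum.inl k)) : ℕ) = (k : ℕ) := by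
    intro k; simp [σ]
  have hσ2 : ∀ k : Fin n, ((σ (Sum.inr k)) : ℕ) = m + (k : ℕ) := by
    intro k; simp [σ]; omega
  -- compute lhs
  have hlhs : kron n m (PauliString n s₁) (PauliString m s₂) i j =
      (∏ k : Fin n, pauliMat (s₁ k)
          ⟨(i : ℕ) / 2 ^ m / 2 ^ (k : ℕ) % 2, Nat.mod_lt _ (by norm_num)⟩
          ⟨(j : ℕ) / 2 ^ m / 2 ^ (k : ℕ) % 2, Nat.mod_lt _ (by norm_num)⟩) *
      ∏ k : Fin m, pauliMat (s₂ k)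
          ⟨(i : ℕ) % 2 ^ m / 2 ^ (k : ℕ) % 2, Nat.mod_lt _ (by norm_num)⟩
          ⟨(j : ℕ) % 2 ^ m / 2 ^ (k : ℕ) % 2, Nat.mod_lt _ (by norm_num)⟩ := rfl
  rw [hlhs, mul_comm]
  congr 1
  · apply Finset.prod_congr rfl
    intro k _
    rw [hcomb1 k]
    congr 1 <;> · rw [qubit]; apply Fin.ext; simp only [hσ1]; exact (nat_low k.isLt _).symm
  · apply Finset.prod_congr rfl
    intro k _
    rw [hcomb2 k]
    congr 1 <;> · rw [qubit]; apply Fin.ext; simp only [hσ2]; exact (nat_high _ _ _).symm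

lemma qubit_inj {n : ℕ} {i j : Fin (2 ^ n)} (h : ∀ k : Fin n, qubit k i = qubit k j) :
    i = j := by
  apply Fin.ext
  apply Nat.eq_of_testBit_eq
  intro k
  by_cases hk : k < n
  · have := congrArg Fin.val (h ⟨k, hk⟩)
    simp only [qubit] at this
    simp [Nat.testBit_eq_decide_div_mod_eq, this]
  · have hi : (i : ℕ) < 2 ^ k := lt_of_lt_of_le i.isLt (Nat.pow_le_pow_right (by norm_num) (by omega))
    have hj : (j : ℕ) < 2 ^ k := lt_of_lt_of_le j.isLt (Nat.pow_le_pow_right (by norm_num) (by omega))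
    rw [Nat.testBit_lt_two_pow hi, Nat.testBit_lt_two_pow hj]

lemma pauliString_zero (n : ℕ) : PauliString n (fun _ => 0) = 1 := by
  ext i j
  simp only [PauliString, nfold, Matrix.of_apply, pauliMat]
  by_cases h : i = j
  · subst h
    simp [Matrix.one_apply]
  · rw [Matrix.one_apply_ne h]
    obtain ⟨k, hk⟩ : ∃ k : Fin n, qubit k i ≠ qubit k j := by
      by_contra hc
      push_neg at hc
      exact h (qubit_inj hc)
    exact Finset.prod_eq_zero (Finset.mem_univ k) (Matrix.one_apply_ne hk)

lemma OTOC_one (n : ℕ) (U : Matrix (Fin (2 ^ n)) (Fin (2 ^ n)) ℂ)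
    (hU : U ∈ Matrix.unitaryGroup (Fin (2 ^ n)) ℂ) : OTOC n U 1 1 = 1 := by
  have h : Uᴴ * U = 1 := by
    simpa [Matrix.star_eq_conjTranspose] using hU.1
  simp only [OTOC, mul_one]
  rw [show Uᴴ * U * Uᴴ * U = (Uᴴ * U) * (Uᴴ * U) from by rw [mul_assoc], h, one_mul,
    Matrix.trace_one]
  simp only [Fintype.card_fin, Nat.cast_pow, Nat.cast_ofNat]
  rw [inv_mul_cancel₀ (by exact_mod_cast pow_ne_zero n (two_ne_zero (α := ℂ)))]

lemma sum_pos (n : ℕ) (U : Matrix (Fin (2 ^ n)) (Fin (2 ^ n)) ℂ)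
    (hU : U ∈ Matrix.unitaryGroup (Fin (2 ^ n)) ℂ) :
    0 < ∑ s₁ : Fin n → Fin 4, ∑ s₂ : Fin n → Fin 4,
        ‖OTOC n U (PauliString n s₁) (PauliString n s₂)‖ := by
  apply Finset.sum_pos'
  · intro i _; positivity
  · refine ⟨fun _ => 0, Finset.mem_univ _, ?_⟩
    apply Finset.sum_pos'
    · intro i _; positivity
    · refine ⟨fun _ => 0, Finset.mem_univ _, ?_⟩
      rw [pauliString_zero, OTOC_one n U hU]
      norm_num

/-- Additivity: For any unitaries `U₁` on `ℂ^(2^n)` and `U₂` on `ℂ^(2^m)`,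
the Pauli instability satisfies `𝕀(U₁⊗U₂) = 𝕀(U₁) + 𝕀(U₂)`. -/
theorem pauliInstability_additive (n m : ℕ)
    (U₁ : Matrix (Fin (2 ^ n)) (Fin (2 ^ n)) ℂ)
    (U₂ : Matrix (Fin (2 ^ m)) (Fin (2 ^ m)) ℂ)
    (hU₁ : U₁ ∈ Matrix.unitaryGroup (Fin (2 ^ n)) ℂ)
    (hU₂ : U₂ ∈ Matrix.unitaryGroup (Fin (2 ^ m)) ℂ) :
    pauliInstability (n + m) (kron n m U₁ U₂) =
      pauliInstability n U₁ + pauliInstability m U₂ := by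
  set S₁ : ℝ := ∑ s₁ : Fin n → Fin 4, ∑ s₂ : Fin n → Fin 4,
      ‖OTOC n U₁ (PauliString n s₁) (PauliString n s₂)‖ with hS₁
  set S₂ : ℝ := ∑ s₁ : Fin m → Fin 4, ∑ s₂ : Fin m → Fin 4,
      ‖OTOC m U₂ (PauliString m s₁) (PauliString m s₂)‖ with hS₂
  have h1 : 0 < S₁ := sum_pos n U₁ hU₁
  have h2 : 0 < S₂ := sum_pos m U₂ hU₂
  have key : (∑ t₁ : Fin (n + m) → Fin 4, ∑ t₂ : Fin (n + m) → Fin 4,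
      ‖OTOC (n + m) (kron n m U₁ U₂)
        (PauliString (n + m) t₁) (PauliString (n + m) t₂)‖) = S₁ * S₂ := by
    rw [← Equiv.sum_comp (combineEquiv n m)
      (fun t₁ => ∑ t₂ : Fin (n + m) → Fin 4, ‖OTOC (n + m) (kron n m U₁ U₂)
        (PauliString (n + m) t₁) (PauliString (n + m) t₂)‖)]
    rw [Fintype.sum_prod_type]
    have inner : ∀ p₁ : Fin n → Fin 4, ∀ p₂ : Fin m → Fin 4,
        (∑ t₂ : Fin (n + m) → Fin 4, ‖OTOC (n + m) (kron n m U₁ U₂)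
          (PauliString (n + m) (combineEquiv n m (p₁, p₂))) (PauliString (n + m) t₂)‖)
        = ∑ q₁ : Fin n → Fin 4, ∑ q₂ : Fin m → Fin 4,
            ‖OTOC n U₁ (PauliString n p₁) (PauliString n q₁)‖ *
            ‖OTOC m U₂ (PauliString m p₂) (PauliString m q₂)‖ := by
      intro p₁ p₂
      rw [← Equiv.sum_comp (combineEquiv n m)
        (fun t₂ => ‖OTOC (n + m) (kron n m U₁ U₂)
          (PauliString (n + m) (combineEquiv n m (p₁, p₂))) (PauliString (n + m) t₂)‖)]
      rw [Fintype.sum_prod_type]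
      apply Finset.sum_congr rfl; intro q₁ _
      apply Finset.sum_congr rfl; intro q₂ _
      rw [← pauliString_kron, ← pauliString_kron, OTOC_kron, norm_mul]
    calc ∑ p₁ : Fin n → Fin 4, ∑ p₂ : Fin m → Fin 4,
          (∑ t₂ : Fin (n + m) → Fin 4, ‖OTOC (n + m) (kron n m U₁ U₂)
            (PauliString (n + m) (combineEquiv n m (p₁, p₂))) (PauliString (n + m) t₂)‖)
        = ∑ p₁ : Fin n → Fin 4, ∑ p₂ : Fin m → Fin 4, ∑ q₁ : Fin n → Fin 4,
            ∑ q₂ : Fin m → Fin 4,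
            ‖OTOC n U₁ (PauliString n p₁) (PauliString n q₁)‖ *
            ‖OTOC m U₂ (PauliString m p₂) (PauliString m q₂)‖ := by
          apply Finset.sum_congr rfl; intro p₁ _
          apply Finset.sum_congr rfl; intro p₂ _
          exact inner p₁ p₂
      _ = S₁ * S₂ := by
          rw [hS₁, hS₂, Finset.sum_mul_sum]
          apply Finset.sum_congr rfl; intro p₁ _
          apply Finset.sum_congr rfl; intro p₂ _
          exact (Finset.sum_mul_sum _ _ _ _).symm
  rw [pauliInstability, pauliInstability, pauliInstability, key]
  rw [show ((16 : ℝ) ^ (n + m))⁻¹ = (16 ^ n : ℝ)⁻¹ * (16 ^ m : ℝ)⁻¹ by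
    rw [pow_add, mul_inv]]
  rw [show (16 ^ n : ℝ)⁻¹ * (16 ^ m : ℝ)⁻¹ * (S₁ * S₂)
      = ((16 ^ n : ℝ)⁻¹ * S₁) * ((16 ^ m : ℝ)⁻¹ * S₂) by ring]
  rw [Real.log_mul (by positivity) (by positivity)]
  ring


end
end

section
/- (Scaling with T gates) For every n and every 0 ≤ k ≤ n, the Pauli instability of the unitary U_k = T^{⊗k} ⊗ I^{⊗(n-k)} on ℂ^(2^n) is 𝕀(U_k) = k·log(4/3), where T = diag(1, e^{iπ/4}) is the T gate. -/
open Matrix Complex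

noncomputable section

/-- The T gate `T = diag(1, e^{iπ/4})`. -/
def Tgate : Matrix (Fin 2) (Fin 2) ℂ :=
  !![1, 0; 0, Complex.exp (Real.pi / 4 * Complex.I)]


namespace PauliAux

lemma qubit_eq {n : ℕ} (k : Fin n) (i : Fin (2 ^ n)) :
    qubit k i = finFunctionFinEquiv.symm i k := by
  apply Fin.ext; simp [qubit]

lemma nfold_mul (n : ℕ) (f g : Fin n → Matrix (Fin 2) (Fin 2) ℂ) :
    nfold n f * nfold n g = nfold n fun k => f k * g k := by
  ext i j
  rw [Matrix.mul_apply]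
  show (∑ m, (∏ k, f k (qubit k i) (qubit k m)) * ∏ k, g k (qubit k m) (qubit k j))
      = ∏ k, (f k * g k) (qubit k i) (qubit k j)
  rw [← finFunctionFinEquiv.sum_comp (M := ℂ)]
  simp only [qubit_eq, Equiv.symm_apply_apply]
  rw [Finset.sum_congr rfl (fun t _ => (Finset.prod_mul_distrib).symm)]
  rw [← Fintype.prod_sum (κ := fun _ : Fin n => Fin 2)
    (f := fun k b => f k (finFunctionFinEquiv.symm i k) b * g k b (finFunctionFinEquiv.symm j k))]
  exact Finset.prod_congr rfl fun k _ => (Matrix.mul_apply).symm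

lemma nfold_trace (n : ℕ) (f : Fin n → Matrix (Fin 2) (Fin 2) ℂ) :
    (nfold n f).trace = ∏ k, (f k).trace := by
  rw [Matrix.trace]
  show (∑ m, ∏ k, f k (qubit k m) (qubit k m)) = _
  rw [← finFunctionFinEquiv.sum_comp (M := ℂ)]
  simp only [qubit_eq, Equiv.symm_apply_apply]
  rw [← Fintype.prod_sum (κ := fun _ : Fin n => Fin 2) (f := fun k b => f k b b)]
  exact Finset.prod_congr rfl fun k _ => rfl

lemma nfold_conjT (n : ℕ) (f : Fin n → Matrix (Fin 2) (Fin 2) ℂ) :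
    (nfold n f)ᴴ = nfold n fun k => (f k)ᴴ := by
  ext i j
  show (starRingEnd ℂ) (∏ k, f k (qubit k j) (qubit k i)) = _
  rw [map_prod]; rfl

/-- Single-qubit OTOC. -/
def otoc1 (U p q : Matrix (Fin 2) (Fin 2) ℂ) : ℂ :=
  (2 : ℂ)⁻¹ * (Uᴴ * p * U * q * Uᴴ * p * U * q).trace

lemma hc : Complex.exp (Real.pi / 4 * Complex.I) =
    (Real.sqrt 2 / 2 : ℝ) + (Real.sqrt 2 / 2 : ℝ) * Complex.I := by
  rw [show ((Real.pi : ℂ) / 4 * Complex.I) = ((Real.pi / 4 : ℝ) : ℂ) * Complex.I by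
    push_cast; ring]
  rw [Complex.exp_mul_I, ← Complex.ofReal_cos, ← Complex.ofReal_sin,
    Real.cos_pi_div_four, Real.sin_pi_div_four]

lemma S_one : ∑ a : Fin 4, ∑ b : Fin 4,
    ‖otoc1 1 (pauliMat a) (pauliMat b)‖ = 16 := by
  simp only [Fin.sum_univ_four]
  norm_num [otoc1, pauliMat, Matrix.trace_fin_two, Matrix.mul_apply, Fin.sum_univ_two,
    Matrix.one_apply, Complex.norm_def, Complex.normSq_apply]

set_option maxHeartbeats 1000000 in
lemma S_T : ∑ a : Fin 4, ∑ b : Fin 4, ‖otoc1 Tgate (pauliMat a) (pauliMat b)‖ = 12 := by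
  have h00 : otoc1 Tgate (pauliMat 0) (pauliMat 0) = 1 := by
    simp only [otoc1, pauliMat, Tgate, hc, Matrix.trace_fin_two, Matrix.mul_apply,
      Fin.sum_univ_two, Matrix.conjTranspose_apply]
    norm_num [Complex.ext_iff, Real.sq_sqrt] <;> ring_nf <;> norm_num [Real.sq_sqrt, show (Real.sqrt 2)^4 = 4 by rw [show 4 = 2*2 from rfl, pow_mul]; norm_num [Real.sq_sqrt]]
  have h01 : otoc1 Tgate (pauliMat 0) (pauliMat 1) = 1 := by
    simp only [otoc1, pauliMat, Tgate, hc, Matrix.trace_fin_two, Matrix.mul_apply,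
      Fin.sum_univ_two, Matrix.conjTranspose_apply]
    norm_num [Complex.ext_iff, Real.sq_sqrt] <;> ring_nf <;> norm_num [Real.sq_sqrt, show (Real.sqrt 2)^4 = 4 by rw [show 4 = 2*2 from rfl, pow_mul]; norm_num [Real.sq_sqrt]]
  have h02 : otoc1 Tgate (pauliMat 0) (pauliMat 2) = 1 := by
    simp only [otoc1, pauliMat, Tgate, hc, Matrix.trace_fin_two, Matrix.mul_apply,
      Fin.sum_univ_two, Matrix.conjTranspose_apply]
    norm_num [Complex.ext_iff, Real.sq_sqrt] <;> ring_nf <;> norm_num [Real.sq_sqrt, show (Real.sqrt 2)^4 = 4 by rw [show 4 = 2*2 from rfl, pow_mul]; norm_num [Real.sq_sqrt]]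
  have h03 : otoc1 Tgate (pauliMat 0) (pauliMat 3) = 1 := by
    simp only [otoc1, pauliMat, Tgate, hc, Matrix.trace_fin_two, Matrix.mul_apply,
      Fin.sum_univ_two, Matrix.conjTranspose_apply]
    norm_num [Complex.ext_iff, Real.sq_sqrt] <;> ring_nf <;> norm_num [Real.sq_sqrt, show (Real.sqrt 2)^4 = 4 by rw [show 4 = 2*2 from rfl, pow_mul]; norm_num [Real.sq_sqrt]]
  have h10 : otoc1 Tgate (pauliMat 1) (pauliMat 0) = 1 := by
    simp only [otoc1, pauliMat, Tgate, hc, Matrix.trace_fin_two, Matrix.mul_apply,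
      Fin.sum_univ_two, Matrix.conjTranspose_apply]
    norm_num [Complex.ext_iff, Real.sq_sqrt] <;> ring_nf <;> norm_num [Real.sq_sqrt, show (Real.sqrt 2)^4 = 4 by rw [show 4 = 2*2 from rfl, pow_mul]; norm_num [Real.sq_sqrt]]
  have h11 : otoc1 Tgate (pauliMat 1) (pauliMat 1) = 0 := by
    simp only [otoc1, pauliMat, Tgate, hc, Matrix.trace_fin_two, Matrix.mul_apply,
      Fin.sum_univ_two, Matrix.conjTranspose_apply]
    norm_num [Complex.ext_iff, Real.sq_sqrt] <;> ring_nf <;> norm_num [Real.sq_sqrt, show (Real.sqrt 2)^4 = 4 by rw [show 4 = 2*2 from rfl, pow_mul]; norm_num [Real.sq_sqrt]]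
  have h12 : otoc1 Tgate (pauliMat 1) (pauliMat 2) = 0 := by
    simp only [otoc1, pauliMat, Tgate, hc, Matrix.trace_fin_two, Matrix.mul_apply,
      Fin.sum_univ_two, Matrix.conjTranspose_apply]
    norm_num [Complex.ext_iff, Real.sq_sqrt] <;> ring_nf <;> norm_num [Real.sq_sqrt, show (Real.sqrt 2)^4 = 4 by rw [show 4 = 2*2 from rfl, pow_mul]; norm_num [Real.sq_sqrt]]
  have h13 : otoc1 Tgate (pauliMat 1) (pauliMat 3) = -1 := by
    simp only [otoc1, pauliMat, Tgate, hc, Matrix.trace_fin_two, Matrix.mul_apply,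
      Fin.sum_univ_two, Matrix.conjTranspose_apply]
    norm_num [Complex.ext_iff, Real.sq_sqrt] <;> ring_nf <;> norm_num [Real.sq_sqrt, show (Real.sqrt 2)^4 = 4 by rw [show 4 = 2*2 from rfl, pow_mul]; norm_num [Real.sq_sqrt]]
  have h20 : otoc1 Tgate (pauliMat 2) (pauliMat 0) = 1 := by
    simp only [otoc1, pauliMat, Tgate, hc, Matrix.trace_fin_two, Matrix.mul_apply,
      Fin.sum_univ_two, Matrix.conjTranspose_apply]
    norm_num [Complex.ext_iff, Real.sq_sqrt] <;> ring_nf <;> norm_num [Real.sq_sqrt, show (Real.sqrt 2)^4 = 4 by rw [show 4 = 2*2 from rfl, pow_mul]; norm_num [Real.sq_sqrt]]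
  have h21 : otoc1 Tgate (pauliMat 2) (pauliMat 1) = 0 := by
    simp only [otoc1, pauliMat, Tgate, hc, Matrix.trace_fin_two, Matrix.mul_apply,
      Fin.sum_univ_two, Matrix.conjTranspose_apply]
    norm_num [Complex.ext_iff, Real.sq_sqrt] <;> ring_nf <;> norm_num [Real.sq_sqrt, show (Real.sqrt 2)^4 = 4 by rw [show 4 = 2*2 from rfl, pow_mul]; norm_num [Real.sq_sqrt]]
  have h22 : otoc1 Tgate (pauliMat 2) (pauliMat 2) = 0 := by
    simp only [otoc1, pauliMat, Tgate, hc, Matrix.trace_fin_two, Matrix.mul_apply,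
      Fin.sum_univ_two, Matrix.conjTranspose_apply]
    norm_num [Complex.ext_iff, Real.sq_sqrt] <;> ring_nf <;> norm_num [Real.sq_sqrt, show (Real.sqrt 2)^4 = 4 by rw [show 4 = 2*2 from rfl, pow_mul]; norm_num [Real.sq_sqrt]]
  have h23 : otoc1 Tgate (pauliMat 2) (pauliMat 3) = -1 := by
    simp only [otoc1, pauliMat, Tgate, hc, Matrix.trace_fin_two, Matrix.mul_apply,
      Fin.sum_univ_two, Matrix.conjTranspose_apply]
    norm_num [Complex.ext_iff, Real.sq_sqrt] <;> ring_nf <;> norm_num [Real.sq_sqrt, show (Real.sqrt 2)^4 = 4 by rw [show 4 = 2*2 from rfl, pow_mul]; norm_num [Real.sq_sqrt]]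
  have h30 : otoc1 Tgate (pauliMat 3) (pauliMat 0) = 1 := by
    simp only [otoc1, pauliMat, Tgate, hc, Matrix.trace_fin_two, Matrix.mul_apply,
      Fin.sum_univ_two, Matrix.conjTranspose_apply]
    norm_num [Complex.ext_iff, Real.sq_sqrt] <;> ring_nf <;> norm_num [Real.sq_sqrt, show (Real.sqrt 2)^4 = 4 by rw [show 4 = 2*2 from rfl, pow_mul]; norm_num [Real.sq_sqrt]]
  have h31 : otoc1 Tgate (pauliMat 3) (pauliMat 1) = -1 := by
    simp only [otoc1, pauliMat, Tgate, hc, Matrix.trace_fin_two, Matrix.mul_apply,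
      Fin.sum_univ_two, Matrix.conjTranspose_apply]
    norm_num [Complex.ext_iff, Real.sq_sqrt] <;> ring_nf <;> norm_num [Real.sq_sqrt, show (Real.sqrt 2)^4 = 4 by rw [show 4 = 2*2 from rfl, pow_mul]; norm_num [Real.sq_sqrt]]
  have h32 : otoc1 Tgate (pauliMat 3) (pauliMat 2) = -1 := by
    simp only [otoc1, pauliMat, Tgate, hc, Matrix.trace_fin_two, Matrix.mul_apply,
      Fin.sum_univ_two, Matrix.conjTranspose_apply]
    norm_num [Complex.ext_iff, Real.sq_sqrt] <;> ring_nf <;> norm_num [Real.sq_sqrt, show (Real.sqrt 2)^4 = 4 by rw [show 4 = 2*2 from rfl, pow_mul]; norm_num [Real.sq_sqrt]]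
  have h33 : otoc1 Tgate (pauliMat 3) (pauliMat 3) = 1 := by
    simp only [otoc1, pauliMat, Tgate, hc, Matrix.trace_fin_two, Matrix.mul_apply,
      Fin.sum_univ_two, Matrix.conjTranspose_apply]
    norm_num [Complex.ext_iff, Real.sq_sqrt] <;> ring_nf <;> norm_num [Real.sq_sqrt, show (Real.sqrt 2)^4 = 4 by rw [show 4 = 2*2 from rfl, pow_mul]; norm_num [Real.sq_sqrt]]
  simp only [Fin.sum_univ_four, h00, h01, h02, h03, h10, h11, h12, h13, h20, h21, h22, h23, h30, h31, h32, h33]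
  norm_num

lemma sum_prod {n : ℕ} (g : Fin n → Fin 4 → Fin 4 → ℝ) :
    (∑ s₁ : Fin n → Fin 4, ∑ s₂ : Fin n → Fin 4, ∏ i, g i (s₁ i) (s₂ i))
      = ∏ i, ∑ a, ∑ b, g i a b := by
  rw [Fintype.prod_sum (κ := fun _ : Fin n => Fin 4) (f := fun i a => ∑ b, g i a b)]
  exact Finset.sum_congr rfl fun s₁ _ =>
    (Fintype.prod_sum (κ := fun _ : Fin n => Fin 4) (f := fun i b => g i (s₁ i) b)).symm

lemma card_filter_lt {n k : ℕ} (hk : k ≤ n) :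
    (Finset.univ.filter fun i : Fin n => (i : ℕ) < k).card = k := by
  have : (Finset.univ.filter fun i : Fin n => (i : ℕ) < k)
      = Finset.map (Fin.castLEEmb hk) Finset.univ := by
    ext i
    simp only [Finset.mem_filter, Finset.mem_univ, true_and, Finset.mem_map,
      Fin.castLEEmb_apply]
    constructor
    · intro h; exact ⟨⟨i, h⟩, by apply Fin.ext; rfl⟩
    · rintro ⟨a, rfl⟩; exact a.isLt
  rw [this, Finset.card_map, Finset.card_univ, Fintype.card_fin]

end PauliAux

open PauliAux
/-- Scaling with T gates: For every `n` and every `0 ≤ k ≤ n`, the Pauli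
instability of `U_k = T^{⊗k} ⊗ I^{⊗(n-k)}` is `𝕀(U_k) = k·log(4/3)`. -/
theorem pauliInstability_tgates (n k : ℕ) (hk : k ≤ n) :
    pauliInstability n (nfold n fun i => if (i : ℕ) < k then Tgate else 1) =
      (k : ℝ) * Real.log (4 / 3) := by
  have hOTOC : ∀ s₁ s₂ : Fin n → Fin 4,
      OTOC n (nfold n fun i => if (i : ℕ) < k then Tgate else 1)
        (PauliString n s₁) (PauliString n s₂)
      = ∏ i : Fin n, otoc1 (if (i : ℕ) < k then Tgate else 1) (pauliMat (s₁ i)) (pauliMat (s₂ i)) := by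
    intro s₁ s₂
    rw [OTOC, PauliString, PauliString, nfold_conjT, nfold_mul, nfold_mul, nfold_mul,
      nfold_mul, nfold_mul, nfold_mul, nfold_mul, nfold_trace]
    rw [show ((2 : ℂ) ^ n)⁻¹ = ∏ _i : Fin n, (2 : ℂ)⁻¹ by
      simp [Finset.prod_const, inv_pow], ← Finset.prod_mul_distrib]
    rfl
  have hsum : (∑ s₁ : Fin n → Fin 4, ∑ s₂ : Fin n → Fin 4,
      ‖OTOC n (nfold n fun i => if (i : ℕ) < k then Tgate else 1)
        (PauliString n s₁) (PauliString n s₂)‖)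
      = ∏ i : Fin n, (if (i : ℕ) < k then (12 : ℝ) else 16) := by
    simp only [hOTOC, norm_prod]
    rw [sum_prod (fun i a b => ‖otoc1 (if (i : ℕ) < k then Tgate else 1) (pauliMat a) (pauliMat b)‖)]
    refine Finset.prod_congr rfl fun i _ => ?_
    by_cases h : (i : ℕ) < k
    · simp only [h, if_true]; exact S_T
    · simp only [h, if_false]; exact S_one
  have hprod : (∏ i : Fin n, (if (i : ℕ) < k then (12 : ℝ) else 16))
      = 12 ^ k * 16 ^ (n - k) := by
    rw [Finset.prod_ite, Finset.prod_const, Finset.prod_const, card_filter_lt hk]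
    have h2 := Finset.card_filter_add_card_filter_not
      (s := (Finset.univ : Finset (Fin n))) (p := fun i : Fin n => (i : ℕ) < k)
    rw [card_filter_lt hk, Finset.card_univ, Fintype.card_fin] at h2
    have h3 : (Finset.filter (fun i : Fin n => ¬ (i : ℕ) < k) Finset.univ).card = n - k := by
      omega
    rw [h3]
  rw [pauliInstability, hsum, hprod]
  have h1 : ((16 : ℝ) ^ n)⁻¹ * (12 ^ k * 16 ^ (n - k)) = (3 / 4 : ℝ) ^ k := by
    rw [show (16 : ℝ) ^ n = 16 ^ k * 16 ^ (n - k) by rw [← pow_add, Nat.add_sub_cancel' hk]]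
    rw [show ((3 : ℝ) / 4) ^ k = 12 ^ k / 16 ^ k by rw [← div_pow]; norm_num]
    field_simp
  rw [h1, Real.log_pow, show ((3 : ℝ) / 4) = (4 / 3)⁻¹ by norm_num, Real.log_inv]
  push_cast
  ring


end
end

section
/- (Position independence of T-gate scaling) For every function k : {1,…,n} → {0,1}, the Pauli instability of the unitary ⊗_{i=1}^{n} T^{k_i} on ℂ^(2^n) equals (Σ_{i=1}^{n} k_i)·log(4/3), where T⁰ is the 2×2 identity and T¹ = T = diag(1, e^{iπ/4}). -/
open Matrix Complex

noncomputable section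

/-! ### Auxiliary lemmas -/

lemma qubit_eq {n : ℕ} (k : Fin n) (i : Fin (2 ^ n)) :
    qubit k i = finFunctionFinEquiv.symm i k := by
  ext; simp [qubit, finFunctionFinEquiv_symm_apply_val]

lemma nfold_mul (n : ℕ) (f g : Fin n → Matrix (Fin 2) (Fin 2) ℂ) :
    nfold n f * nfold n g = nfold n (fun k => f k * g k) := by
  ext i j
  simp only [nfold, Matrix.mul_apply, Matrix.of_apply, qubit_eq]
  rw [← Equiv.sum_comp (finFunctionFinEquiv (m := 2) (n := n))]
  simp only [Equiv.symm_apply_apply, ← Finset.prod_mul_distrib]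
  rw [Finset.prod_univ_sum (fun _ => (Finset.univ : Finset (Fin 2)))
    (fun k x => f k (finFunctionFinEquiv.symm i k) x * g k x (finFunctionFinEquiv.symm j k)),
    Fintype.piFinset_univ]

lemma nfold_conjTranspose (n : ℕ) (f : Fin n → Matrix (Fin 2) (Fin 2) ℂ) :
    (nfold n f)ᴴ = nfold n (fun k => (f k)ᴴ) := by
  ext i j
  simp [nfold, Matrix.conjTranspose_apply, map_prod]

lemma nfold_trace (n : ℕ) (f : Fin n → Matrix (Fin 2) (Fin 2) ℂ) :
    (nfold n f).trace = ∏ k : Fin n, (f k).trace := by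
  simp only [Matrix.trace, Matrix.diag, nfold, Matrix.of_apply, qubit_eq]
  rw [← Equiv.sum_comp (finFunctionFinEquiv (m := 2) (n := n))]
  simp only [Equiv.symm_apply_apply]
  rw [Finset.prod_univ_sum (fun _ => (Finset.univ : Finset (Fin 2)))
    (fun k x => f k x x), Fintype.piFinset_univ]

/-- The single-qubit OTOC (without the name). -/
def o1 (U P₁ P₂ : Matrix (Fin 2) (Fin 2) ℂ) : ℂ :=
  (2 : ℂ)⁻¹ * (Uᴴ * P₁ * U * P₂ * Uᴴ * P₁ * U * P₂).trace

lemma OTOC_nfold (n : ℕ) (U : Fin n → Matrix (Fin 2) (Fin 2) ℂ)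
    (s₁ s₂ : Fin n → Fin 4) :
    OTOC n (nfold n U) (PauliString n s₁) (PauliString n s₂) =
      ∏ k : Fin n, o1 (U k) (pauliMat (s₁ k)) (pauliMat (s₂ k)) := by
  simp only [OTOC, PauliString, o1, nfold_conjTranspose, nfold_mul, nfold_trace]
  rw [Finset.prod_mul_distrib, Finset.prod_const, Finset.card_univ, Fintype.card_fin,
    ← inv_pow]

lemma sum_prod_exchange (n : ℕ) (a : Fin n → Fin 4 → Fin 4 → ℝ) :
    ∑ s₁ : Fin n → Fin 4, ∑ s₂ : Fin n → Fin 4, ∏ k : Fin n, a k (s₁ k) (s₂ k) =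
      ∏ k : Fin n, ∑ p₁ : Fin 4, ∑ p₂ : Fin 4, a k p₁ p₂ := by
  have h1 : ∀ k : Fin n, ∑ p₁ : Fin 4, ∑ p₂ : Fin 4, a k p₁ p₂ =
      ∑ p : Fin 4 × Fin 4, a k p.1 p.2 := fun k =>
    (Fintype.sum_prod_type (f := fun p : Fin 4 × Fin 4 => a k p.1 p.2)).symm
  simp only [h1]
  rw [Finset.prod_univ_sum (fun _ => (Finset.univ : Finset (Fin 4 × Fin 4)))
    (fun k p => a k p.1 p.2), Fintype.piFinset_univ]
  rw [← Fintype.sum_prod_type (f := fun q : (Fin n → Fin 4) × (Fin n → Fin 4) =>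
    ∏ k : Fin n, a k (q.1 k) (q.2 k))]
  exact (Fintype.sum_equiv (Equiv.arrowProdEquivProdArrow (Fin n) (fun _ => Fin 4) (fun _ => Fin 4))
    _ _ (fun t => rfl)).symm

lemma Tct : Tgateᴴ = !![1, 0; 0, Complex.exp (-(Real.pi / 4 * Complex.I))] := by
  ext i j
  fin_cases i <;> fin_cases j <;>
    simp [Tgate, Matrix.conjTranspose_apply, ← Complex.exp_conj, _root_.map_mul,
      Complex.conj_I, Complex.conj_ofReal, map_ofNat]

set_option maxHeartbeats 4000000 in
lemma key (e s : ℂ) (h1 : e * s = 1) (h2 : e * e = Complex.I) (h3 : s * s = -Complex.I) :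
    ∑ p₁ : Fin 4, ∑ p₂ : Fin 4, ‖(2:ℂ)⁻¹ *
      (!![1,0;0,s] * pauliMat p₁ * !![1,0;0,e] * pauliMat p₂ *
       !![1,0;0,s] * pauliMat p₁ * !![1,0;0,e] * pauliMat p₂).trace‖ = 12 := by
  simp only [Fin.sum_univ_four, pauliMat]
  simp (config := { maxSteps := 10000000 }) only [Matrix.mul_one, Matrix.one_mul,
    Matrix.mul_fin_two, Matrix.trace_fin_two_of, mul_zero, zero_mul, mul_one, one_mul,
    add_zero, zero_add, mul_neg, neg_mul, neg_neg, neg_zero, neg_add_rev]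
  have hse : s * e = 1 := by rw [mul_comm]; exact h1
  have he2 : e ^ 2 = Complex.I := by rw [sq]; exact h2
  have hs2 : s ^ 2 = -Complex.I := by rw [sq]; exact h3
  ring_nf
  simp only [he2, hs2, hse, Complex.I_sq]
  norm_num

set_option maxHeartbeats 4000000 in
lemma sum_one : ∑ p₁ : Fin 4, ∑ p₂ : Fin 4,
    ‖o1 1 (pauliMat p₁) (pauliMat p₂)‖ = 16 := by
  simp only [o1, Matrix.conjTranspose_one, Matrix.mul_one, Matrix.one_mul]
  simp only [Fin.sum_univ_four, pauliMat]
  simp (config := { maxSteps := 10000000 }) only [Matrix.mul_one, Matrix.one_mul,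
    Matrix.mul_fin_two, Matrix.trace_fin_two_of, mul_zero, zero_mul, mul_one, one_mul,
    add_zero, zero_add, mul_neg, neg_mul, neg_neg, neg_zero, neg_add_rev]
  ring_nf
  simp only [Complex.I_sq]
  norm_num

set_option maxHeartbeats 1000000 in
lemma sum_T : ∑ p₁ : Fin 4, ∑ p₂ : Fin 4,
    ‖o1 Tgate (pauliMat p₁) (pauliMat p₂)‖ = 12 := by
  have h1 : Complex.exp (Real.pi / 4 * Complex.I) *
      Complex.exp (-(Real.pi / 4 * Complex.I)) = 1 := by
    rw [← Complex.exp_add, add_neg_cancel, Complex.exp_zero]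
  have hhalf : (Real.pi : ℂ) / 4 * Complex.I + (Real.pi : ℂ) / 4 * Complex.I =
      ((Real.pi / 2 : ℝ) : ℂ) * Complex.I := by push_cast; ring
  have h2 : Complex.exp (Real.pi / 4 * Complex.I) *
      Complex.exp (Real.pi / 4 * Complex.I) = Complex.I := by
    rw [← Complex.exp_add, hhalf, Complex.exp_mul_I,
      ← Complex.ofReal_cos, ← Complex.ofReal_sin, Real.cos_pi_div_two, Real.sin_pi_div_two]
    simp
  have h3 : Complex.exp (-(Real.pi / 4 * Complex.I)) *
      Complex.exp (-(Real.pi / 4 * Complex.I)) = -Complex.I := by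
    have heq : -((Real.pi : ℂ) / 4 * Complex.I) + -((Real.pi : ℂ) / 4 * Complex.I) =
        ((-(Real.pi / 2) : ℝ) : ℂ) * Complex.I := by push_cast; ring
    rw [← Complex.exp_add, heq, Complex.exp_mul_I,
      ← Complex.ofReal_cos, ← Complex.ofReal_sin, Real.cos_neg, Real.sin_neg,
      Real.cos_pi_div_two, Real.sin_pi_div_two]
    simp
  simp only [o1, Tct]
  simp only [Tgate]
  exact key _ _ h1 h2 h3

lemma sum_Tpow (m : Fin 2) : ∑ p₁ : Fin 4, ∑ p₂ : Fin 4,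
    ‖o1 (Tgate ^ (m : ℕ)) (pauliMat p₁) (pauliMat p₂)‖ =
      16 * (3 / 4 : ℝ) ^ (m : ℕ) := by
  fin_cases m
  · simpa using sum_one
  · norm_num [sum_T]

/-- Position independence of T-gate scaling: For every
`k : Fin n → {0,1}`, the Pauli instability of `⊗_{i=1}^{n} T^{k_i}` equals
`(Σ_i k_i)·log(4/3)`. -/
theorem pauliInstability_tgates_position_independent (n : ℕ) (k : Fin n → Fin 2) :
    pauliInstability n (nfold n fun i => Tgate ^ ((k i : ℕ))) =
      ((∑ i : Fin n, (k i : ℕ) : ℕ) : ℝ) * Real.log (4 / 3) := by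
  have hfac : ∀ s₁ s₂ : Fin n → Fin 4,
      ‖OTOC n (nfold n fun i => Tgate ^ ((k i : ℕ)))
        (PauliString n s₁) (PauliString n s₂)‖ =
      ∏ i : Fin n, ‖o1 (Tgate ^ ((k i : ℕ))) (pauliMat (s₁ i)) (pauliMat (s₂ i))‖ := by
    intro s₁ s₂
    rw [OTOC_nfold]
    exact norm_prod _ _
  unfold pauliInstability
  simp only [hfac]
  rw [sum_prod_exchange n (fun i p₁ p₂ =>
    ‖o1 (Tgate ^ ((k i : ℕ))) (pauliMat p₁) (pauliMat p₂)‖)]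
  simp only [sum_Tpow]
  rw [Finset.prod_mul_distrib, Finset.prod_const, Finset.card_univ, Fintype.card_fin,
    Finset.prod_pow_eq_pow_sum]
  rw [show ((16:ℝ) ^ n)⁻¹ * ((16:ℝ) ^ n * (3/4 : ℝ) ^ (∑ i : Fin n, (k i : ℕ))) =
      (3/4 : ℝ) ^ (∑ i : Fin n, (k i : ℕ)) by
    field_simp]
  rw [Real.log_pow]
  have : Real.log (3/4 : ℝ) = -Real.log (4/3 : ℝ) := by
    rw [← Real.log_inv]; norm_num
  rw [this]
  push_cast
  ring

end
end
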